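/- With α = Δ+2, so that K = {1, 2, …, Δ+1, Δ+2}, there exists a tuple (β_{e_1}, …, β_{e_m}) with each β_{e_j} ∈ {1, 2, …, Δ+2} such that Q_1(β_{e_1}, …, β_{e_m}) ≠ 0 in Z_p; in particular the Fermat reduction Q'_1 of Q_1 is not the zero polynomial. -/

import Mathlib

open MvPolynomial
open scoped Classical

noncomputable section

/-- Exponent reduction implementing Fermat's relation `x^p ≡ x`:
`0 ↦ 0` and `k ↦ ((k-1) mod (p-1)) + 1` for `k ≥ 1`. -/
def fermatExp (p k : ℕ) : ℕ := if k = 0 then 0 else (k - 1) % (p - 1) + 1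

lemma fermatExp_zero (p : ℕ) : fermatExp p 0 = 0 := by simp [fermatExp]

/-- The Fermat reduction `F'` of a multivariate polynomial over `Z_p`: every exponent is
reduced using `x^p ≡ x`, so that the result has degree `≤ p-1` in each variable. -/
def fermatReduce {σ : Type*} (p : ℕ) (F : MvPolynomial σ (ZMod p)) : MvPolynomial σ (ZMod p) :=
  F.support.sum fun d => monomial (d.mapRange (fermatExp p) (fermatExp_zero p)) (F.coeff d)

/-- Univariate Fermat reduction. -/
def fermatReduceUni (p : ℕ) (f : Polynomial (ZMod p)) : Polynomial (ZMod p) :=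
  f.support.sum fun k => Polynomial.monomial (fermatExp p k) (f.coeff k)

/-- `N_e(v_i)`: the edges incident to the vertex `i`. -/
def incidentE {n m : ℕ} (ed : Fin m → Sym2 (Fin n)) (i : Fin n) : Finset (Fin m) :=
  Finset.univ.filter fun k => i ∈ ed k

/-- `N_i(v_i)`: the neighbours of `v_i` other than `v_1, …, v_{i-1}`. -/
def laterNbrs {n m : ℕ} (ed : Fin m → Sym2 (Fin n)) (i : Fin n) : Finset (Fin n) :=
  Finset.univ.filter fun j => (∃ k, ed k = s(i, j)) ∧ ¬ j < i

/-- `N_i(e_i)`: the edges sharing an endpoint with `e_i`, other than `e_1, …, e_{i-1}`. -/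
def laterAdjE {n m : ℕ} (ed : Fin m → Sym2 (Fin n)) (k : Fin m) : Finset (Fin m) :=
  Finset.univ.filter fun l => (l ≠ k ∧ ∃ x, x ∈ ed k ∧ x ∈ ed l) ∧ ¬ l < k

/-- The polynomial `P` (vertex variables are `Sum.inl`, edge variables are `Sum.inr`). -/
def Ppoly (n m Δ p : ℕ) (ed : Fin m → Sym2 (Fin n)) : MvPolynomial (Fin n ⊕ Fin m) (ZMod p) :=
  ∏ i : Fin n,
    ((∏ j ∈ laterNbrs ed i, (X (Sum.inl i) - X (Sum.inl j))) *
      (∏ k ∈ incidentE ed i, (X (Sum.inl i) - X (Sum.inr k))) *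
      (∏ l ∈ Finset.Icc (Δ + 2) p, (X (Sum.inl i) - C (l : ZMod p))))

/-- The coefficient of the vertex-monomial `∏ v_j ^ (d j)` of `F`, as a polynomial in the
edge variables. -/
def vCoeff {n m p : ℕ} (F : MvPolynomial (Fin n ⊕ Fin m) (ZMod p)) (d : Fin n →₀ ℕ) :
    MvPolynomial (Fin m) (ZMod p) :=
  ((sumAlgEquiv (ZMod p) (Fin n) (Fin m)) F).coeff d

/-- The colour set `K = {1, …, Δ+1} ∪ {α} ⊆ Z_p`. -/
def colorSet (Δ p : ℕ) (α : ZMod p) : Finset (ZMod p) :=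
  insert α ((Finset.Icc 1 (Δ + 1)).image fun l : ℕ => (l : ZMod p))

/-- The polynomial `E^k`. -/
def Epoly {n m : ℕ} (Δ p : ℕ) [NeZero p] (ed : Fin m → Sym2 (Fin n)) (α : ZMod p) (k : Fin m) :
    MvPolynomial (Fin m) (ZMod p) :=
  (∏ l ∈ laterAdjE ed k, (X k - X l)) *
    (∏ c ∈ Finset.univ \ colorSet Δ p α, (X k - C c))

/-- `Q_i = C^{P'} · E^1 ⋯ E^i`; here `i` is the number of edge factors, so `Qpoly … i`
is the paper's `Q_i` (and `Qpoly … 0 = C^{P'}`). -/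
def Qpoly {n m : ℕ} (Δ p : ℕ) [NeZero p] (ed : Fin m → Sym2 (Fin n)) (α : ZMod p)
    (CP : MvPolynomial (Fin m) (ZMod p)) (i : ℕ) : MvPolynomial (Fin m) (ZMod p) :=
  CP * ∏ k ∈ Finset.univ.filter (fun k : Fin m => (k : ℕ) < i), Epoly Δ p ed α k

/-- Fermat reduction in all variables except the variable `j`. -/
def fermatReduceExcept {m : ℕ} (p : ℕ) (j : Fin m) (F : MvPolynomial (Fin m) (ZMod p)) :
    MvPolynomial (Fin m) (ZMod p) :=
  F.support.sum fun d =>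
    monomial (Finsupp.filter (fun k => k = j) d +
      Finsupp.mapRange (fermatExp p) (fermatExp_zero p) (Finsupp.filter (fun k => k ≠ j) d))
      (F.coeff d)

/-- Given an exponent vector `d0` for the variables other than `j`, the coefficient in `F` of the
monomial `∏_{k ≠ j} X_k ^ (d0 k)`, as a univariate polynomial in the variable `j`. -/
def coeffAt {m p : ℕ} (j : Fin m) (d0 : Fin m →₀ ℕ) (F : MvPolynomial (Fin m) (ZMod p)) :
    Polynomial (ZMod p) :=
  (F.support.filter fun d => ∀ k, k ≠ j → d k = d0 k).sum fun d =>
    Polynomial.monomial (d j) (F.coeff d)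


/-!
An edge variable `e_k` occurs in `P` with degree at most `2`, one factor `v_i - e_k` for each
endpoint of `e_k`, and neither Fermat reduction nor taking the coefficient of a vertex monomial can
raise that degree; so `C^{P'}` has degree at most `2` in every variable. As `|K| = Δ + 2 ≥ 3`, some
`β_{e_1} ∈ K` leaves the slice `C^{P'}(β_{e_1}, ·)` nonzero, and the combinatorial Nullstellensatz
then gives the other `β_{e_j} ∈ K`, taken different from `β_{e_1}` when `e_j` meets `e_1`: such an
edge forces `Δ ≥ 2`, so `K ∖ {β_{e_1}}` still has at least `3` elements. At this `β` every factor
of `E^1` is nonzero, and `Q'_1` takes the same values as `Q_1`.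
-/

open Finset

namespace MvPolynomial

section Degrees

variable {R σ : Type*} [CommRing R] [Nontrivial R]

theorem degreeOf_X_sub_X_le (i s t : σ) :
    (X s - X t : MvPolynomial σ R).degreeOf i ≤
      (if i = s then 1 else 0) + if i = t then 1 else 0 :=
  (degreeOf_sub_le _ _ _).trans (by simp only [degreeOf_X]; omega)

theorem degreeOf_X_sub_C_le (i s : σ) (c : R) :
    (X s - C c : MvPolynomial σ R).degreeOf i ≤ if i = s then 1 else 0 :=
  (degreeOf_sub_le _ _ _).trans (by simp only [degreeOf_X, degreeOf_C]; omega)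

end Degrees

section SumEquiv

variable {R : Type*} [CommSemiring R] {S₁ S₂ : Type*}

theorem sumAlgEquiv_monomial_sumElim (u₁ : S₁ →₀ ℕ) (u₂ : S₂ →₀ ℕ) (c : R) :
    sumAlgEquiv R S₁ S₂ (monomial (u₁.sumElim u₂) c) = monomial u₁ (monomial u₂ c) := by
  simp only [monomial_eq, Finsupp.prod_sumElim, map_mul, map_finsuppProd, map_pow,
    sumAlgEquiv_C_inl, Function.comp_def, sumAlgEquiv_X_inl, sumAlgEquiv_X_inr]
  ring

theorem coeff_coeff_sumAlgEquiv (F : MvPolynomial (S₁ ⊕ S₂) R) (d : S₁ →₀ ℕ) (e : S₂ →₀ ℕ) :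
    ((sumAlgEquiv R S₁ S₂ F).coeff d).coeff e = F.coeff (d.sumElim e) := by
  induction F using induction_on' with
  | monomial u c =>
    rw [← Finsupp.comapDomain_sumElim_comapDomain u, sumAlgEquiv_monomial_sumElim]
    generalize Finsupp.comapDomain Sum.inl u _ = u₁
    generalize Finsupp.comapDomain Sum.inr u _ = u₂
    have sumElim_eq_iff : u₁.sumElim u₂ = d.sumElim e ↔ u₁ = d ∧ u₂ = e :=
      ⟨fun h => ⟨by simpa using congrArg (Finsupp.comapDomain Sum.inl · Sum.inl_injective.injOn) h,
        by simpa using congrArg (Finsupp.comapDomain Sum.inr · Sum.inr_injective.injOn) h⟩,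
        by rintro ⟨rfl, rfl⟩; rfl⟩
    simp only [coeff_monomial, sumElim_eq_iff]
    split_ifs <;> simp_all
  | add F G hF hG => simp only [map_add, coeff_add, hF, hG]

end SumEquiv

section FinSucc

variable {R : Type*} [CommSemiring R] {n : ℕ}

theorem eval_eval_C_finSuccEquiv (f : MvPolynomial (Fin (n + 1)) R) (a : R) (x : Fin n → R) :
    eval x ((finSuccEquiv R n f).eval (C a)) = eval (Fin.cons a x) f := by
  rw [eval_eq_eval_mv_eval', ← eval_C (σ := Fin n) (f := x) a, Polynomial.eval_map_apply, eval_C]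

theorem degreeOf_eval_C_finSuccEquiv_le (f : MvPolynomial (Fin (n + 1)) R) (a : R) (j : Fin n) :
    ((finSuccEquiv R n f).eval (C a)).degreeOf j ≤ f.degreeOf j.succ := by
  rw [Polynomial.eval_eq_sum_range]
  refine (degreeOf_sum_le _ _ _).trans (Finset.sup_le fun i _ => ?_)
  rw [← map_pow, mul_comm]
  exact (degreeOf_C_mul_le _ _ _).trans (degreeOf_coeff_finSuccEquiv f j i)

end FinSucc

section Nullstellensatz

variable {R : Type*} [CommRing R] [IsDomain R]

theorem exists_eval_ne_zero_of_degreeOf_lt {σ : Type*} [Finite σ] {f : MvPolynomial σ R}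
    (hf : f ≠ 0) (S : σ → Finset R) (hdeg : ∀ i, f.degreeOf i < #(S i)) :
    ∃ x : σ → R, (∀ i, x i ∈ S i) ∧ eval x f ≠ 0 := by
  by_contra! h
  exact hf (eq_zero_of_eval_zero_at_prod_finset f S hdeg h)

variable {n : ℕ}

theorem exists_eval_C_finSuccEquiv_ne_zero {f : MvPolynomial (Fin (n + 1)) R} (hf : f ≠ 0)
    (S : Finset R) (hS : f.degreeOf 0 < #S) : ∃ a ∈ S, (finSuccEquiv R n f).eval (C a) ≠ 0 := by
  by_contra! h
  refine hf ((finSuccEquiv R n).injective ?_)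
  rw [map_zero]
  refine Polynomial.eq_zero_of_natDegree_lt_card_of_eval_eq_zero _
    ((C_injective (Fin n) R).comp Subtype.val_injective) (fun a : S => h a a.2) ?_
  rwa [natDegree_finSuccEquiv, Fintype.card_coe]

theorem exists_eval_ne_zero_of_degreeOf_lt_avoiding {f : MvPolynomial (Fin (n + 1)) R}
    (hf : f ≠ 0) (K : Finset R) (A : Finset (Fin (n + 1))) (hA : 0 ∉ A)
    (hK : ∀ j, f.degreeOf j < #K) (hKA : ∀ j ∈ A, f.degreeOf j + 1 < #K) :
    ∃ x : Fin (n + 1) → R, (∀ j, x j ∈ K) ∧ (∀ j ∈ A, x j ≠ x 0) ∧ eval x f ≠ 0 := by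
  obtain ⟨a, haK, ha⟩ := exists_eval_C_finSuccEquiv_ne_zero hf K (hK 0)
  let T : Fin n → Finset R := fun j => if j.succ ∈ A then K.erase a else K
  have hT (j : Fin n) : ((finSuccEquiv R n f).eval (C a)).degreeOf j < #(T j) := by
    have hdeg := degreeOf_eval_C_finSuccEquiv_le f a j
    by_cases hj : j.succ ∈ A
    · have := hKA _ hj
      simp only [T, if_pos hj, card_erase_of_mem haK]
      omega
    · simpa only [T, if_neg hj] using hdeg.trans_lt (hK _)
  obtain ⟨x, hxT, hx⟩ := exists_eval_ne_zero_of_degreeOf_lt ha T hT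
  replace hxT : ∀ j, x j ∈ if j.succ ∈ A then K.erase a else K := hxT
  have hxK (j : Fin n) : x j ∈ K := by
    have := hxT j
    split_ifs at this
    exacts [mem_of_mem_erase this, this]
  refine ⟨Fin.cons a x, Fin.cases haK hxK, fun j hj => ?_, by rwa [← eval_eval_C_finSuccEquiv]⟩
  obtain ⟨i, rfl⟩ := Fin.exists_succ_eq.mpr (ne_of_mem_of_not_mem hj hA)
  have := hxT i
  rw [if_pos hj] at this
  simpa using ne_of_mem_erase this

end Nullstellensatz

end MvPolynomial

section Fermat

theorem fermatExp_le (p k : ℕ) : fermatExp p k ≤ k := by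
  unfold fermatExp
  split_ifs
  · omega
  · have := Nat.mod_le (k - 1) (p - 1)
    omega

variable {p : ℕ}

theorem pow_fermatExp [Fact p.Prime] (a : ZMod p) (k : ℕ) : a ^ fermatExp p k = a ^ k := by
  rcases Nat.eq_zero_or_pos k with rfl | hk
  · rw [fermatExp_zero]
  rcases eq_or_ne a 0 with rfl | ha
  · rw [zero_pow (by unfold fermatExp; split_ifs <;> omega), zero_pow hk.ne']
  have hk : k = fermatExp p k + (p - 1) * ((k - 1) / (p - 1)) := by
    have := Nat.div_add_mod (k - 1) (p - 1)
    unfold fermatExp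
    split_ifs <;> omega
  conv_rhs => rw [hk, pow_add, pow_mul, ZMod.pow_card_sub_one_eq_one ha, one_pow, mul_one]

variable {σ : Type*}

theorem eval_fermatReduce [Fact p.Prime] (x : σ → ZMod p) (F : MvPolynomial σ (ZMod p)) :
    eval x (fermatReduce p F) = eval x F := by
  conv_rhs => rw [← support_sum_monomial_coeff F]
  simp only [fermatReduce, map_sum, eval_monomial]
  refine sum_congr rfl fun u _ => ?_
  rw [Finsupp.prod_mapRange_index (by simp)]
  simp only [pow_fermatExp]

theorem degreeOf_fermatReduce_le (F : MvPolynomial σ (ZMod p)) (i : σ) :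
    (fermatReduce p F).degreeOf i ≤ F.degreeOf i :=
  (degreeOf_sum_le _ _ _).trans <| Finset.sup_le fun u hu =>
    degreeOf_le_iff.mpr fun e he => by
      rw [mem_singleton.mp (support_monomial_subset he), Finsupp.mapRange_apply]
      exact (fermatExp_le p (u i)).trans (monomial_le_degreeOf i hu)

end Fermat

theorem card_filter_mem_sym2_le_two {α : Type*} [Fintype α] (z : Sym2 α)
    [DecidablePred (· ∈ z)] : #{a | a ∈ z} ≤ 2 := by
  calc #{a | a ∈ z} = #z.toFinset := by congr 1; ext; simp [Sym2.mem_toFinset]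
    _ ≤ 2 := by rw [Sym2.card_toFinset]; split_ifs <;> omega

section Graph

variable {n m : ℕ} (ed : Fin m → Sym2 (Fin n))

theorem mem_incidentE {i : Fin n} {k : Fin m} : k ∈ incidentE ed i ↔ i ∈ ed k := by
  simp [incidentE]

theorem self_notMem_laterAdjE (k : Fin m) : k ∉ laterAdjE ed k := by
  simp [laterAdjE]

theorem degreeOf_vCoeff_le {p : ℕ} (F : MvPolynomial (Fin n ⊕ Fin m) (ZMod p))
    (d : Fin n →₀ ℕ) (j : Fin m) : (vCoeff F d).degreeOf j ≤ F.degreeOf (Sum.inr j) :=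
  degreeOf_le_iff.mpr fun e he => by
    rw [vCoeff, mem_support_iff, coeff_coeff_sumAlgEquiv, ← mem_support_iff] at he
    exact monomial_le_degreeOf (Sum.inr j) he

theorem degreeOf_Ppoly_inr_le {Δ p : ℕ} [Fact p.Prime] (k : Fin m) :
    (Ppoly n m Δ p ed).degreeOf (Sum.inr k) ≤ 2 := by
  have hfactor (i : Fin n) :
      ((∏ j ∈ laterNbrs ed i, (X (Sum.inl i) - X (Sum.inl j))) *
        (∏ k' ∈ incidentE ed i, (X (Sum.inl i) - X (Sum.inr k'))) *
        (∏ l ∈ Icc (Δ + 2) p, (X (Sum.inl i) - C (l : ZMod p))) :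
          MvPolynomial (Fin n ⊕ Fin m) (ZMod p)).degreeOf (Sum.inr k) ≤
        if i ∈ ed k then 1 else 0 := by
    calc _ ≤ (∑ j ∈ laterNbrs ed i, (0 + 0) + ∑ k' ∈ incidentE ed i, (0 + if k = k' then 1 else 0))
          + ∑ l ∈ Icc (Δ + 2) p, 0 := by
          refine (degreeOf_mul_le _ _ _).trans (add_le_add ((degreeOf_mul_le _ _ _).trans
            (add_le_add ?_ ?_)) ?_) <;>
            refine (degreeOf_prod_le _ _ _).trans (sum_le_sum fun _ _ => ?_)
          · exact (degreeOf_X_sub_X_le _ _ _).trans (by simp)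
          · exact (degreeOf_X_sub_X_le _ _ _).trans (by simp)
          · exact (degreeOf_X_sub_C_le _ _ _).trans (by simp)
      _ = if i ∈ ed k then 1 else 0 := by simp [sum_ite_eq, incidentE]
  calc _ ≤ ∑ i : Fin n, if i ∈ ed k then 1 else 0 :=
        (degreeOf_prod_le _ _ _).trans (sum_le_sum fun i _ => hfactor i)
    _ ≤ 2 := by rw [sum_boole, Nat.cast_id]; exact card_filter_mem_sym2_le_two (ed k)

variable {ed} {Δ : ℕ}

theorem one_le_of_card_incidentE_le (hΔ : ∀ i, #(incidentE ed i) ≤ Δ) (k : Fin m) : 1 ≤ Δ :=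
  (card_pos.mpr ⟨k, (mem_incidentE ed).mpr (Sym2.out_fst_mem (ed k))⟩).trans_le (hΔ _)

theorem two_le_of_mem_laterAdjE (hΔ : ∀ i, #(incidentE ed i) ≤ Δ) {k l : Fin m}
    (hl : l ∈ laterAdjE ed k) : 2 ≤ Δ := by
  obtain ⟨hlk, x, hxk, hxl⟩ := (mem_filter.mp hl).2.1
  calc 2 = #{k, l} := (card_pair (Ne.symm hlk)).symm
    _ ≤ #(incidentE ed x) := card_le_card <| by
      simp [insert_subset_iff, mem_incidentE, hxk, hxl]
    _ ≤ Δ := hΔ x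

end Graph

section Colouring

variable {n m Δ p : ℕ}

theorem card_image_natCast_Icc {b : ℕ} (hb : b < p) :
    #((Icc 1 b).image fun l : ℕ => (l : ZMod p)) = b := by
  rw [card_image_of_injOn, Nat.card_Icc, Nat.add_sub_cancel]
  intro x hx y hy hxy
  simp only [coe_Icc, Set.mem_Icc] at hx hy
  simpa [ZMod.val_natCast_of_lt (hx.2.trans_lt hb), ZMod.val_natCast_of_lt (hy.2.trans_lt hb)]
    using congrArg ZMod.val hxy

theorem colorSet_natCast_add_two :
    colorSet Δ p ((Δ + 2 : ℕ) : ZMod p) = (Icc 1 (Δ + 2)).image fun l : ℕ => (l : ZMod p) := by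
  rw [colorSet, ← image_insert, show Δ + 2 = Δ + 1 + 1 from rfl,
    insert_Icc_right_eq_Icc_add_one (by omega)]

theorem eval_Epoly_ne_zero [Fact p.Prime] (ed : Fin m → Sym2 (Fin n)) {α : ZMod p}
    {β : Fin m → ZMod p} {k : Fin m} (hk : β k ∈ colorSet Δ p α)
    (hadj : ∀ l ∈ laterAdjE ed k, β l ≠ β k) : eval β (Epoly Δ p ed α k) ≠ 0 := by
  simp only [Epoly, map_mul, map_prod, map_sub, eval_X, eval_C]
  refine mul_ne_zero (prod_ne_zero_iff.mpr fun l hl => sub_ne_zero.mpr (hadj l hl).symm)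
    (prod_ne_zero_iff.mpr fun c hc => sub_ne_zero.mpr ?_)
  rintro rfl
  exact (mem_sdiff.mp hc).2 hk

theorem Qpoly_one [NeZero p] (ed : Fin (m + 1) → Sym2 (Fin n)) (α : ZMod p)
    (CP : MvPolynomial (Fin (m + 1)) (ZMod p)) :
    Qpoly Δ p ed α CP 1 = CP * Epoly Δ p ed α 0 := by
  rw [Qpoly, show (univ.filter fun k : Fin (m + 1) => (k : ℕ) < 1) = {0} by ext; simp,
    prod_singleton]

end Colouring

theorem statement3_general (n m Δ p : ℕ) [Fact p.Prime]
    (hm : 1 ≤ m) (hp : m ^ 2 * (2 * Δ + 2) ≤ p)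
    (ed : Fin m → Sym2 (Fin n))
    (hΔ : ∀ i, (incidentE ed i).card ≤ Δ)
    (d : Fin n →₀ ℕ) (CP : MvPolynomial (Fin m) (ZMod p))
    (hCP : CP = vCoeff (fermatReduce p (Ppoly n m Δ p ed)) d) (hCP0 : CP ≠ 0) :
    ∃ β : Fin m → ZMod p,
      (∀ j, β j ∈ (Finset.Icc 1 (Δ + 2)).image fun l : ℕ => (l : ZMod p)) ∧
      (eval β (Qpoly Δ p ed ((Δ + 2 : ℕ) : ZMod p) CP 1) ≠ 0 ∧
        fermatReduce p (Qpoly Δ p ed ((Δ + 2 : ℕ) : ZMod p) CP 1) ≠ 0) := by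
  obtain ⟨m, rfl⟩ : ∃ m', m = m' + 1 := ⟨m - 1, by omega⟩
  have hΔ1 := one_le_of_card_incidentE_le hΔ 0
  have hp' : 2 * Δ + 2 ≤ p := (Nat.le_mul_of_pos_left _ (by positivity)).trans hp
  set K := (Finset.Icc 1 (Δ + 2)).image fun l : ℕ => (l : ZMod p)
  have hK : #K = Δ + 2 := card_image_natCast_Icc (by omega)
  have hdeg (j : Fin (m + 1)) : CP.degreeOf j ≤ 2 := hCP ▸ (degreeOf_vCoeff_le _ d j).trans
    ((degreeOf_fermatReduce_le _ _).trans (degreeOf_Ppoly_inr_le ed j))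
  obtain ⟨β, hβK, hβadj, hβ⟩ := exists_eval_ne_zero_of_degreeOf_lt_avoiding hCP0 K
    (laterAdjE ed 0) (self_notMem_laterAdjE ed 0) (fun j => by linarith [hdeg j])
    (fun j hj => by linarith [hdeg j, two_le_of_mem_laterAdjE hΔ hj])
  have hQ : eval β (Qpoly Δ p ed ((Δ + 2 : ℕ) : ZMod p) CP 1) ≠ 0 := by
    rw [Qpoly_one, map_mul]
    exact mul_ne_zero hβ
      (eval_Epoly_ne_zero ed (by rw [colorSet_natCast_add_two]; exact hβK 0) hβadj)
  exact ⟨β, hβK, hQ, fun h => hQ (by rw [← eval_fermatReduce, h, map_zero])⟩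

/-- Claim 3.13 of the paper. With `α = Δ+2`, so that
`K = {1, 2, …, Δ+2}`, there is a tuple `β` with every entry in `{1, …, Δ+2}` such that
`Q_1(β) ≠ 0` in `Z_p`; in particular the Fermat reduction `Q'_1` of `Q_1` is nonzero. -/
theorem statement3 (n m Δ p : ℕ) [Fact p.Prime]
    (hm : 1 ≤ m) (hp : m ^ 2 * (2 * Δ + 2) ≤ p)
    (ed : Fin m → Sym2 (Fin n)) (hinj : Function.Injective ed)
    (hsimple : ∀ k, ¬ (ed k).IsDiag)
    (hΔ : ∀ i, (incidentE ed i).card ≤ Δ)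
    (hΔmax : ∃ i, (incidentE ed i).card = Δ)
    (d : Fin n →₀ ℕ) (CP : MvPolynomial (Fin m) (ZMod p))
    (hCP : CP = vCoeff (fermatReduce p (Ppoly n m Δ p ed)) d) (hCP0 : CP ≠ 0) :
    ∃ β : Fin m → ZMod p,
      (∀ j, β j ∈ (Finset.Icc 1 (Δ + 2)).image fun l : ℕ => (l : ZMod p)) ∧
      (eval β (Qpoly Δ p ed ((Δ + 2 : ℕ) : ZMod p) CP 1) ≠ 0 ∧
        fermatReduce p (Qpoly Δ p ed ((Δ + 2 : ℕ) : ZMod p) CP 1) ≠ 0) :=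
  statement3_general n m Δ p hm hp ed hΔ d CP hCP hCP0

end
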